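/- The maximum-multicommodity-flow objective is Lipschitz in the flow vector: for every demand vector D : U → ℝ with D u ≥ 0 for all u (each tunnel containing at least one edge), and for all x, y : T → ℝ with x, y ≥ 0 componentwise, |f_MMCF(x, D) − f_MMCF(y, D)| ≤ 2 · (card T) · (C_max/C_min) · Σ_{p ∈ T} |x p − y p|. -/

import Mathlib

/-!
Since `min (D u) ·` is 1-Lipschitz, it suffices to bound `Σ_u |y_u(x) - y_u(y)|`. Writing
`y_u = s_u / γ` with `s_u` the total flow of pair `u`, split
`s_u(x)/γ(x) - s_u(y)/γ(y) = (s_u(x) - s_u(y))/γ(x) + s_u(y) (γ(y) - γ(x))/(γ(x) γ(y))`.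
As `γ ≥ 1`, the first terms sum to at most `‖x - y‖₁`. For the second, `γ` is
`1/C_min`-Lipschitz for the ℓ1 norm, and every tunnel `p` contains an edge `e`, whence
`y p ≤ load_e(y) ≤ C_max γ(y)` and `Σ_u s_u(y) ≤ |T| C_max γ(y)`; so these terms sum to at most
`|T| (C_max/C_min) ‖x - y‖₁`, which also dominates `‖x - y‖₁`.
-/

open Finset

/-- Load on edge `e` induced by the flow vector `x`: `Σ_{p ∈ T, e ∈ p} x p`. -/
noncomputable def edgeLoad {E T : Type*} [Fintype T] [DecidableEq E]
    (tun : T → Finset E) (x : T → ℝ) (e : E) : ℝ :=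
  ∑ p, if e ∈ tun p then x p else 0

/-- Normalization constant `γ(x) = max (max_{e ∈ E} load_e(x) / C e) 1`. -/
noncomputable def gamma {E T : Type*} [Fintype E] [Nonempty E] [Fintype T] [DecidableEq E]
    (C : E → ℝ) (tun : T → Finset E) (x : T → ℝ) : ℝ :=
  max (univ.sup' univ_nonempty (fun e => edgeLoad tun x e / C e)) 1

/-- Normalized pair flow `y_u(x) = (Σ_{p ∈ T, pair p = u} x p) / γ(x)`. -/
noncomputable def pairFlow {E T U : Type*} [Fintype E] [Nonempty E] [Fintype T]
    [DecidableEq E] [DecidableEq U]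
    (C : E → ℝ) (tun : T → Finset E) (pair : T → U) (x : T → ℝ) (u : U) : ℝ :=
  (∑ p, if pair p = u then x p else 0) / gamma C tun x

/-- Maximum-multicommodity-flow objective `f_MMCF(x, D) = Σ_{u ∈ U} min (D u) (y_u(x))`. -/
noncomputable def fMMCF {E T U : Type*} [Fintype E] [Nonempty E] [Fintype T] [Fintype U]
    [DecidableEq E] [DecidableEq U]
    (C : E → ℝ) (tun : T → Finset E) (pair : T → U) (D : U → ℝ) (x : T → ℝ) : ℝ :=
  ∑ u, min (D u) (pairFlow C tun pair x u)

lemma abs_sup'_sub_sup'_le {ι : Type*} {s : Finset ι} (hs : s.Nonempty) {f g : ι → ℝ} {c : ℝ}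
    (h : ∀ i ∈ s, |f i - g i| ≤ c) : |s.sup' hs f - s.sup' hs g| ≤ c := by
  rw [abs_sub_le_iff, sub_le_iff_le_add, sub_le_iff_le_add]
  constructor
  · refine sup'_le _ _ fun i hi => ?_
    linarith [le_abs_self (f i - g i), h i hi, le_sup' g hi]
  · refine sup'_le _ _ fun i hi => ?_
    linarith [neg_abs_le (f i - g i), h i hi, le_sup' f hi]

lemma abs_div_sub_div_le {a b g h : ℝ} (hb : 0 ≤ b) (hg : 1 ≤ g) (hh : 0 < h) :
    |a / g - b / h| ≤ |a - b| + b * |g - h| / h := by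
  have hg0 : 0 < g := one_pos.trans_le hg
  have split : a / g - b / h = (a - b) / g + b * (h - g) / h / g := by
    field_simp; ring
  rw [split]
  refine (abs_add_le _ _).trans (add_le_add ?_ ?_)
  · rw [abs_div, abs_of_pos hg0]
    exact div_le_self (abs_nonneg _) hg
  · rw [abs_div, abs_of_pos hg0, abs_div, abs_of_pos hh, abs_mul, abs_of_nonneg hb, abs_sub_comm]
    exact div_le_self (by positivity) hg

lemma abs_sum_ite_sub_sum_ite_le {ι : Type*} (s : Finset ι) (P : ι → Prop) [DecidablePred P]
    (x y : ι → ℝ) :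
    |(∑ i ∈ s, if P i then x i else 0) - ∑ i ∈ s, if P i then y i else 0| ≤
      ∑ i ∈ s, if P i then |x i - y i| else 0 := by
  rw [← sum_sub_distrib]
  refine (abs_sum_le_sum_abs _ _).trans (sum_le_sum fun i _ => ?_)
  split_ifs <;> simp

section Network

variable {E T : Type*} [Fintype T] [DecidableEq E]

lemma abs_edgeLoad_sub_le (tun : T → Finset E) (x y : T → ℝ) (e : E) :
    |edgeLoad tun x e - edgeLoad tun y e| ≤ ∑ p, |x p - y p| :=
  (abs_sum_ite_sub_sum_ite_le _ _ x y).trans <| sum_le_sum fun p _ => by split_ifs <;> simp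

lemma le_edgeLoad {tun : T → Finset E} {x : T → ℝ} (hx : ∀ p, 0 ≤ x p) {p : T} {e : E}
    (he : e ∈ tun p) : x p ≤ edgeLoad tun x e := by
  simpa [he, edgeLoad] using single_le_sum (f := fun q => if e ∈ tun q then x q else 0)
    (fun q _ => by split_ifs <;> simp [hx q]) (mem_univ p)

variable [Fintype E] [Nonempty E]

lemma one_le_gamma (C : E → ℝ) (tun : T → Finset E) (x : T → ℝ) : 1 ≤ gamma C tun x :=
  le_max_right _ _

lemma edgeLoad_le_gamma_mul {C : E → ℝ} (hC : ∀ e, 0 < C e) (tun : T → Finset E) (x : T → ℝ)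
    (e : E) : edgeLoad tun x e ≤ gamma C tun x * C e := by
  rw [← div_le_iff₀ (hC e)]
  exact (le_sup' (fun e => edgeLoad tun x e / C e) (mem_univ e)).trans (le_max_left _ _)

lemma abs_gamma_sub_le {C : E → ℝ} (hC : ∀ e, 0 < C e) (tun : T → Finset E) (x y : T → ℝ) :
    |gamma C tun x - gamma C tun y| ≤ (∑ p, |x p - y p|) / univ.inf' univ_nonempty C := by
  refine (abs_max_sub_max_le_abs _ _ _).trans (abs_sup'_sub_sup'_le _ fun e _ => ?_)
  rw [← sub_div, abs_div, abs_of_pos (hC e)]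
  exact div_le_div₀ (by positivity) (abs_edgeLoad_sub_le tun x y e)
    ((lt_inf'_iff _).2 fun e _ => hC e) (inf'_le _ (mem_univ e))

lemma sum_le_card_mul_sup'_mul_gamma {C : E → ℝ} (hC : ∀ e, 0 < C e) {tun : T → Finset E}
    (htun : ∀ p, (tun p).Nonempty) {x : T → ℝ} (hx : ∀ p, 0 ≤ x p) :
    ∑ p, x p ≤ Fintype.card T * (univ.sup' univ_nonempty C * gamma C tun x) := by
  have hxp : ∀ p ∈ univ, x p ≤ univ.sup' univ_nonempty C * gamma C tun x := by
    intro p _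
    obtain ⟨e, he⟩ := htun p
    calc x p ≤ edgeLoad tun x e := le_edgeLoad hx he
      _ ≤ gamma C tun x * C e := edgeLoad_le_gamma_mul hC tun x e
      _ ≤ gamma C tun x * univ.sup' univ_nonempty C :=
        mul_le_mul_of_nonneg_left (le_sup' C (mem_univ e))
          (zero_le_one.trans (one_le_gamma C tun x))
      _ = _ := mul_comm _ _
  simpa using sum_le_card_nsmul _ _ _ hxp

end Network

section Pairs

variable {T U : Type*} [Fintype T] [DecidableEq U]

/-- `pairFlow C tun pair x u` unfolds to `pairTotal pair x u / gamma C tun x`. -/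
noncomputable def pairTotal (pair : T → U) (x : T → ℝ) (u : U) : ℝ :=
  ∑ p, if pair p = u then x p else 0

lemma pairTotal_nonneg (pair : T → U) {x : T → ℝ} (hx : ∀ p, 0 ≤ x p) (u : U) :
    0 ≤ pairTotal pair x u :=
  sum_nonneg fun p _ => by split_ifs <;> simp [hx p]

variable [Fintype U]

lemma sum_pairTotal (pair : T → U) (x : T → ℝ) : ∑ u, pairTotal pair x u = ∑ p, x p := by
  simp only [pairTotal]
  rw [sum_comm]
  simp

lemma sum_abs_pairTotal_sub_le (pair : T → U) (x y : T → ℝ) :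
    ∑ u, |pairTotal pair x u - pairTotal pair y u| ≤ ∑ p, |x p - y p| :=
  calc ∑ u, |pairTotal pair x u - pairTotal pair y u|
      ≤ ∑ u, pairTotal pair (fun p => |x p - y p|) u :=
        sum_le_sum fun _ _ => abs_sum_ite_sub_sum_ite_le _ _ x y
    _ = ∑ p, |x p - y p| := sum_pairTotal pair _

variable {E : Type*} [Fintype E] [Nonempty E] [DecidableEq E]

lemma abs_fMMCF_sub_le (C : E → ℝ) (tun : T → Finset E) (pair : T → U) (D : U → ℝ)
    (x y : T → ℝ) :
    |fMMCF C tun pair D x - fMMCF C tun pair D y| ≤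
      ∑ u, |pairFlow C tun pair x u - pairFlow C tun pair y u| := by
  rw [fMMCF, fMMCF, ← sum_sub_distrib]
  refine (abs_sum_le_sum_abs _ _).trans (sum_le_sum fun u _ => ?_)
  simpa using abs_min_sub_min_le_max (D u) (pairFlow C tun pair x u) (D u) _

lemma sum_abs_pairFlow_sub_le {C : E → ℝ} (hC : ∀ e, 0 < C e) {tun : T → Finset E}
    (htun : ∀ p, (tun p).Nonempty) (pair : T → U) (x : T → ℝ) {y : T → ℝ}
    (hy : ∀ p, 0 ≤ y p) :
    ∑ u, |pairFlow C tun pair x u - pairFlow C tun pair y u| ≤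
      ∑ p, |x p - y p| + Fintype.card T *
        (univ.sup' univ_nonempty C / univ.inf' univ_nonempty C) * ∑ p, |x p - y p| := by
  have hγy : 0 < gamma C tun y := zero_lt_one.trans_le (one_le_gamma C tun y)
  have hCmin : 0 < univ.inf' univ_nonempty C := (lt_inf'_iff _).2 fun e _ => hC e
  calc ∑ u, |pairFlow C tun pair x u - pairFlow C tun pair y u|
      ≤ ∑ u, (|pairTotal pair x u - pairTotal pair y u| +
          pairTotal pair y u * |gamma C tun x - gamma C tun y| / gamma C tun y) :=
        sum_le_sum fun u _ =>
          abs_div_sub_div_le (pairTotal_nonneg pair hy u) (one_le_gamma C tun x) hγy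
    _ = ∑ u, |pairTotal pair x u - pairTotal pair y u| +
          (∑ p, y p) * |gamma C tun x - gamma C tun y| / gamma C tun y := by
        rw [sum_add_distrib, ← sum_div, ← sum_mul, sum_pairTotal]
    _ ≤ ∑ p, |x p - y p| + Fintype.card T * (univ.sup' univ_nonempty C * gamma C tun y) *
          ((∑ p, |x p - y p|) / univ.inf' univ_nonempty C) / gamma C tun y := by
        gcongr
        · exact sum_abs_pairTotal_sub_le pair x y
        · exact (sum_nonneg fun p _ => hy p).trans (sum_le_card_mul_sup'_mul_gamma hC htun hy)
        · exact sum_le_card_mul_sup'_mul_gamma hC htun hy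
        · exact abs_gamma_sub_le hC tun x y
    _ = _ := by field_simp

end Pairs

theorem fMMCF_lipschitz_general {E T U : Type*} [Fintype E] [Nonempty E] [Fintype T] [Fintype U]
    [DecidableEq E] [DecidableEq U]
    (C : E → ℝ) (hC : ∀ e, 0 < C e) (tun : T → Finset E) (htun : ∀ p, (tun p).Nonempty)
    (pair : T → U)
    (D : U → ℝ)
    (x y : T → ℝ) (hy : ∀ p, 0 ≤ y p) :
    |fMMCF C tun pair D x - fMMCF C tun pair D y| ≤
      2 * (Fintype.card T : ℝ) * (univ.sup' univ_nonempty C / univ.inf' univ_nonempty C)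
        * ∑ p, |x p - y p| := by
  set S := ∑ p, |x p - y p|
  set r := univ.sup' univ_nonempty C / univ.inf' univ_nonempty C
  have hr : 1 ≤ r := by
    obtain ⟨e⟩ := ‹Nonempty E›
    exact (one_le_div ((lt_inf'_iff _).2 fun e _ => hC e)).2
      ((inf'_le C (mem_univ e)).trans (le_sup' C (mem_univ e)))
  have hS : S ≤ Fintype.card T * r * S := by
    rcases isEmpty_or_nonempty T with hT | hT
    · simp [S]
    · exact le_mul_of_one_le_left (sum_nonneg fun p _ => abs_nonneg _)
        (one_le_mul_of_one_le_of_one_le (by exact_mod_cast Fintype.card_pos) hr)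
  calc |fMMCF C tun pair D x - fMMCF C tun pair D y|
      ≤ ∑ u, |pairFlow C tun pair x u - pairFlow C tun pair y u| :=
        abs_fMMCF_sub_le C tun pair D x y
    _ ≤ S + Fintype.card T * r * S := sum_abs_pairFlow_sub_le hC htun pair x hy
    _ ≤ 2 * Fintype.card T * r * S := by linarith

/-- The maximum-multicommodity-flow objective is Lipschitz in the flow vector w.r.t. the
ℓ1 norm, with constant `2 · (card T) · (C_max / C_min)`. -/
theorem fMMCF_lipschitz {E T U : Type*} [Fintype E] [Nonempty E] [Fintype T] [Fintype U]
    [DecidableEq E] [DecidableEq U]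
    (C : E → ℝ) (hC : ∀ e, 0 < C e) (tun : T → Finset E) (htun : ∀ p, (tun p).Nonempty)
    (pair : T → U)
    (D : U → ℝ) (hD : ∀ u, 0 ≤ D u)
    (x y : T → ℝ) (hx : ∀ p, 0 ≤ x p) (hy : ∀ p, 0 ≤ y p) :
    |fMMCF C tun pair D x - fMMCF C tun pair D y| ≤
      2 * (Fintype.card T : ℝ) * (univ.sup' univ_nonempty C / univ.inf' univ_nonempty C)
        * ∑ p, |x p - y p| :=
  fMMCF_lipschitz_general C hC tun htun pair D x y hy
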